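/- For a prime p and positive integers l ≤ p-1, the congruence (l)_{p-l}·(z)_{p-l} / ((2z+1)_{p-l}·(p-l)!) ≡ (-1)^{l-1}·(z(z^{p-1}-1)/((2z)^{p-1}-1))·((2z-l+1)_{l-1}/((z-l)_l)) (mod p) holds as an identity of rational functions in z over ℤ/pℤ, where (a)_n denotes the rising factorial. -/

import Mathlib

/-!
Over `𝔽_p` the rising factorial `(y)_p` is `∏_{a ∈ 𝔽_p} (y + a) = y ^ p - y`, hence
`(y + 1)_{p-1} = y ^ (p - 1) - 1`. Since `p - l = -l` in `𝔽_p`, splitting these products after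
`p - l` factors gives `(z)_{p-l} (z-l)_l = z (z ^ (p-1) - 1)` and
`(2z+1)_{p-l} (2z-l+1)_{l-1} = (2z) ^ (p-1) - 1`, while `(l)_{p-l} = (p-1)!/(l-1)!` is
`(-1) ^ (l-1) (p-l)!` modulo `p`. Substituting these three facts turns both sides into
`(-1) ^ (l-1) (z)_{p-l} / (2z+1)_{p-l}`.
-/

open Polynomial

theorem ascPochhammer_eval_mul_eval_add {S : Type*} [CommSemiring S] (a b : ℕ) (y : S) :
    (ascPochhammer S a).eval y * (ascPochhammer S b).eval (y + a) =
      (ascPochhammer S (a + b)).eval y := by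
  simpa [eval_comp] using congrArg (eval y) (ascPochhammer_mul S a b)

theorem RatFunc.algebraMap_pow_sub_one_ne_zero {K : Type*} [Field K] {q : K[X]}
    (hq : q.eval 0 = 0) {n : ℕ} (hn : n ≠ 0) :
    algebraMap K[X] (RatFunc K) q ^ n - 1 ≠ 0 := by
  rw [← map_pow, ← map_one (algebraMap K[X] (RatFunc K)), ← map_sub]
  refine RatFunc.algebraMap_ne_zero fun h => ?_
  simpa [hq, zero_pow hn] using congrArg (Polynomial.eval 0) h

theorem mul_pow_pred_sub_one {M : Type*} [Ring M] {n : ℕ} (hn : 1 ≤ n) (a : M) :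
    a * (a ^ (n - 1) - 1) = a ^ n - a := by
  rw [mul_sub_one, ← pow_succ', Nat.sub_add_cancel hn]

section CharP

variable (p : ℕ) [Fact p.Prime]

theorem ascPochhammer_zmod_prime : ascPochhammer (ZMod p) p = X ^ p - X := by
  have hp : 1 < p := (Fact.out : p.Prime).one_lt
  have hmonic : (X ^ p - X : (ZMod p)[X]).Monic :=
    monic_X_pow_sub (degree_X_le.trans_lt (by exact_mod_cast hp))
  have hdeg : (ascPochhammer (ZMod p) p).natDegree = p := ascPochhammer_natDegree _ _
  refine eq_of_degree_le_of_eval_finset_eq Finset.univ ?_ ?_ ?_ fun a _ => ?_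
  · rw [degree_eq_natDegree (monic_ascPochhammer _ _).ne_zero, hdeg, Finset.card_univ, ZMod.card]
  · rw [degree_eq_natDegree (monic_ascPochhammer _ _).ne_zero, degree_eq_natDegree hmonic.ne_zero,
      hdeg, FiniteField.X_pow_card_sub_X_natDegree_eq _ hp]
  · rw [(monic_ascPochhammer _ _).leadingCoeff, hmonic.leadingCoeff]
  · -- `a = -k` with `k = (-a).val < p` is a root of `(X)_p`, and `a ^ p = a` by Fermat
    simpa [ZMod.pow_card] using ⟨(-a).val, ZMod.val_lt _, by simp⟩

variable {R : Type*} [CommRing R] [CharP R p]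

theorem ascPochhammer_prime : ascPochhammer R p = X ^ p - X := by
  simpa [ascPochhammer_map] using
    congrArg (map (ZMod.castHom (dvd_refl p) R)) (ascPochhammer_zmod_prime p)

theorem ascPochhammer_pred_prime_comp_X_add_one :
    (ascPochhammer R (p - 1)).comp (X + 1) = X ^ (p - 1) - 1 := by
  have hp : 1 ≤ p := (Fact.out : p.Prime).one_le
  refine (isRegular_X (R := R)).left ?_
  have := ascPochhammer_mul R 1 (p - 1)
  simp only [ascPochhammer_one, Nat.cast_one, Nat.add_sub_cancel' hp, ascPochhammer_prime] at this
  simp only [this, mul_sub, mul_one, ← pow_succ', Nat.sub_add_cancel hp]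

theorem ascPochhammer_eval_mul_eval_sub_of_le {l : ℕ} (hl : l ≤ p) (y : R) :
    (ascPochhammer R (p - l)).eval y * (ascPochhammer R l).eval (y - l) = y ^ p - y := by
  have hcast : ((p - l : ℕ) : R) = -l := by rw [Nat.cast_sub hl, CharP.cast_eq_zero, zero_sub]
  rw [sub_eq_add_neg, ← hcast, ascPochhammer_eval_mul_eval_add, Nat.sub_add_cancel hl,
    ascPochhammer_prime, eval_sub, eval_pow, eval_X]

theorem ascPochhammer_eval_add_one_mul_eval_sub_add_one {l : ℕ} (hl₁ : 1 ≤ l) (hl : l ≤ p)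
    (y : R) :
    (ascPochhammer R (p - l)).eval (y + 1) * (ascPochhammer R (l - 1)).eval (y - l + 1) =
      y ^ (p - 1) - 1 := by
  have hcast : ((p - l : ℕ) : R) = -l := by rw [Nat.cast_sub hl, CharP.cast_eq_zero, zero_sub]
  rw [show y - l + 1 = y + 1 + ((p - l : ℕ) : R) by rw [hcast]; ring,
    ascPochhammer_eval_mul_eval_add, show p - l + (l - 1) = p - 1 by omega]
  simpa [eval_comp] using congrArg (eval y) (ascPochhammer_pred_prime_comp_X_add_one p (R := R))

theorem neg_one_pow_sub_eq_neg_one_pow_pred {l : ℕ} (hl₁ : 1 ≤ l) (hl : l ≤ p) :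
    (-1 : R) ^ (p - l) = (-1) ^ (l - 1) := by
  have hp : (-1 : R) ^ (p - 1) = 1 := by
    have := neg_one_pow_char R p
    rwa [← Nat.sub_add_cancel (Fact.out : p.Prime).one_le, pow_succ, mul_neg_one, neg_inj] at this
  calc (-1 : R) ^ (p - l) = (-1) ^ (p - l) * ((-1) ^ (l - 1)) ^ 2 := by
        rw [← pow_mul, pow_mul', neg_one_sq, one_pow, mul_one]
    _ = (-1) ^ (p - 1) * (-1) ^ (l - 1) := by
        rw [sq, ← mul_assoc, ← pow_add, show p - l + (l - 1) = p - 1 by omega]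
    _ = (-1) ^ (l - 1) := by rw [hp, one_mul]

theorem ascPochhammer_eval_natCast_sub {l : ℕ} (hl₁ : 1 ≤ l) (hl : l ≤ p) :
    (ascPochhammer R (p - l)).eval (l : R) = (-1) ^ (l - 1) * ((p - l).factorial : R) := by
  have := congrArg (ZMod.castHom (dvd_refl p) R) (ZMod.cast_descFactorial (Nat.sub_le p l))
  simp only [map_natCast, map_mul, map_pow, map_neg, map_one] at this
  rw [← ascPochhammer_eval_cast, ascPochhammer_nat_eq_descFactorial,
    show l + (p - l) - 1 = p - 1 by omega, this, neg_one_pow_sub_eq_neg_one_pow_pred p hl₁ hl]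

end CharP

/-- For a prime `p` and `1 ≤ l ≤ p-1`, in `𝔽_p(z)`:
`(l)_{p-l}(z)_{p-l}/((2z+1)_{p-l}(p-l)!) =
 (-1)^{l-1} · z(z^{p-1}-1)/((2z)^{p-1}-1) · (2z-l+1)_{l-1}/((z-l)_l)`. -/
theorem stmt_5 (p l : ℕ) [Fact p.Prime] (hl : 1 ≤ l) (hlp : l ≤ p - 1) :
    (ascPochhammer (RatFunc (ZMod p)) (p - l)).eval (l : RatFunc (ZMod p)) *
        (ascPochhammer (RatFunc (ZMod p)) (p - l)).eval (RatFunc.X) /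
        ((ascPochhammer (RatFunc (ZMod p)) (p - l)).eval (2 * RatFunc.X + 1) *
          ((p - l).factorial : RatFunc (ZMod p))) =
      (-1 : RatFunc (ZMod p)) ^ (l - 1) *
        (RatFunc.X * (RatFunc.X ^ (p - 1) - 1) / ((2 * RatFunc.X) ^ (p - 1) - 1)) *
        ((ascPochhammer (RatFunc (ZMod p)) (l - 1)).eval (2 * RatFunc.X - (l : RatFunc (ZMod p)) + 1) /
          (ascPochhammer (RatFunc (ZMod p)) l).eval (RatFunc.X - (l : RatFunc (ZMod p)))) := by
  have hp := (Fact.out : p.Prime)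
  have hlp' : l ≤ p := by omega
  set x : RatFunc (ZMod p) := RatFunc.X
  have hx_split := ascPochhammer_eval_mul_eval_sub_of_le p hlp' x
  rw [← mul_pow_pred_sub_one hp.one_le] at hx_split
  have h2x_split := ascPochhammer_eval_add_one_mul_eval_sub_add_one p hl hlp' (2 * x)
  have hx_ne : x * (x ^ (p - 1) - 1) ≠ 0 := mul_ne_zero RatFunc.X_ne_zero <| by
    simpa only [RatFunc.algebraMap_X] using
      RatFunc.algebraMap_pow_sub_one_ne_zero (q := (X : (ZMod p)[X])) eval_X (by omega)
  have h2x_ne : (2 * x) ^ (p - 1) - 1 ≠ 0 := by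
    have := RatFunc.algebraMap_pow_sub_one_ne_zero (q := (2 * X : (ZMod p)[X])) (by simp)
      (n := p - 1) (by omega)
    rwa [map_mul, RatFunc.algebraMap_X, map_ofNat] at this
  have hfact : ((p - l).factorial : RatFunc (ZMod p)) ≠ 0 := by
    rw [Ne, CharP.cast_eq_zero_iff _ p, hp.dvd_factorial]
    omega
  rw [← hx_split] at hx_ne
  rw [← h2x_split] at h2x_ne
  rw [ascPochhammer_eval_natCast_sub p hl hlp', ← hx_split, ← h2x_split]
  field_simp [left_ne_zero_of_mul hx_ne, right_ne_zero_of_mul hx_ne,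
    left_ne_zero_of_mul h2x_ne, right_ne_zero_of_mul h2x_ne]
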